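/- arXiv:1306.4350 — 6 statements merged into one kernel-verified Lean document; each statement's English description precedes it below -/
import Mathlib

section
/- Let A_1 and A_2 be complex 2×2 matrices with det A_1 = det A_2 = 1, and let r > 0. Then there exist 2×2 complex unitary matrices U_1, U_2, V such that both U_1† A_1 V and U_2† A_2 V are upper-triangular with diagonal entries r and 1/r (in this order), if and only if the following three conditions hold: det(A_1†A_1 − r²I) ≤ 0, det(A_2†A_2 − r²I) ≤ 0, and F_1(A_1†A_1 − r²I, A_2†A_2 − r²I) ≥ 0. -/
/-!
Put `Sᵢ = Aᵢᴴ Aᵢ − r² I`. The triangular forms exist iff some unit vector `v` has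
`‖A₁ v‖ = ‖A₂ v‖ = r`, i.e. is isotropic for both Hermitian forms `Sᵢ`: then `V` and `Uᵢ` are
the `SU(2)` completions of `v` and of `Aᵢ v / r`, and `det Aᵢ = 1` forces the second diagonal
entry to be `1/r`. Both a common isotropic unit vector and the conditions on `det Sᵢ` and `F₁`
are invariant under unitary congruence, which moves an isotropic vector of `S₁` (it exists
iff `det S₁ ≤ 0`) to the first basis vector. With `S₁ 0 0 = 0` everything is explicit:
`F₁` is, up to a positive factor, the discriminant of the quadratic equation to be solved.
-/

open Matrix ComplexOrder

/-- `F₁(S₁, S₂) = det (S₁ · adj(S₂) − S₂ · adj(S₁))`. -/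
noncomputable def F1 {n : ℕ} (S₁ S₂ : Matrix (Fin n) (Fin n) ℂ) : ℂ :=
  (S₁ * S₂.adjugate - S₂ * S₁.adjugate).det

section HermForm

variable {n α : Type*} [Fintype n]

def hermForm [CommSemiring α] [StarRing α] (S : Matrix n n α) (v : n → α) : α :=
  star v ⬝ᵥ (S *ᵥ v)

theorem hermForm_one [CommSemiring α] [StarRing α] [DecidableEq n] (v : n → α) :
    hermForm 1 v = star v ⬝ᵥ v := by
  rw [hermForm, one_mulVec]

theorem hermForm_smul [CommSemiring α] [StarRing α] (S : Matrix n n α) (c : α) (v : n → α) :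
    hermForm S (c • v) = star c * c * hermForm S v := by
  simp only [hermForm, mulVec_smul, star_smul, smul_dotProduct, dotProduct_smul, smul_eq_mul]
  ring

theorem hermForm_conjTranspose_mul_mul [CommSemiring α] [StarRing α] (U S : Matrix n n α)
    (v : n → α) : hermForm (Uᴴ * S * U) v = hermForm S (U *ᵥ v) := by
  rw [hermForm, hermForm, ← mulVec_mulVec, ← mulVec_mulVec, dotProduct_mulVec, ← star_mulVec]

theorem hermForm_conjTranspose_mul_self_sub_smul [CommRing α] [StarRing α] [DecidableEq n]
    (A : Matrix n n α) (c : α) (v : n → α) :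
    hermForm (Aᴴ * A - c • 1) v = star (A *ᵥ v) ⬝ᵥ (A *ᵥ v) - c * (star v ⬝ᵥ v) := by
  simp only [hermForm, sub_mulVec, smul_mulVec, one_mulVec, dotProduct_sub, dotProduct_smul,
    ← mulVec_mulVec, dotProduct_mulVec, star_mulVec, smul_eq_mul]

theorem exists_smul_unit {v : n → ℂ} (hv : v ≠ 0) : ∃ c : ℂ, star (c • v) ⬝ᵥ (c • v) = 1 := by
  classical
  obtain ⟨hre, him⟩ := Complex.pos_iff.mp (dotProduct_star_self_pos_iff.mpr hv)
  obtain ⟨N, hN0, hN⟩ : ∃ N : ℝ, 0 < N ∧ star v ⬝ᵥ v = N := ⟨_, hre, Complex.ext rfl him.symm⟩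
  refine ⟨((√N)⁻¹ : ℝ), ?_⟩
  rw [← hermForm_one, hermForm_smul, hermForm_one, hN, Complex.star_def, Complex.conj_ofReal,
    ← Complex.ofReal_mul, ← Complex.ofReal_mul, ← mul_inv, Real.mul_self_sqrt hN0.le,
    inv_mul_cancel₀ hN0.ne', Complex.ofReal_one]

end HermForm

section Unitary

variable {n : Type*} [Fintype n] [DecidableEq n] {U : Matrix n n ℂ}

theorem star_mulVec_dotProduct_mulVec (hU : U ∈ unitaryGroup n ℂ) (v : n → ℂ) :
    star (U *ᵥ v) ⬝ᵥ (U *ᵥ v) = star v ⬝ᵥ v := by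
  rw [← hermForm_one, ← hermForm_conjTranspose_mul_mul, Matrix.mul_one, ← star_eq_conjTranspose,
    mem_unitaryGroup_iff'.mp hU, hermForm_one]

theorem det_conjTranspose_mul_mul (hU : U ∈ unitaryGroup n ℂ) (S : Matrix n n ℂ) :
    (Uᴴ * S * U).det = S.det := by
  rw [det_mul_right_comm, det_mul, ← star_eq_conjTranspose, mem_unitaryGroup_iff'.mp hU, det_one,
    one_mul]

end Unitary

theorem F1_mul_mul {n : ℕ} (P Q S₁ S₂ : Matrix (Fin n) (Fin n) ℂ) :
    F1 (P * S₁ * Q) (P * S₂ * Q) = (P.det * Q.det) ^ n * F1 S₁ S₂ := by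
  have key : ∀ T₁ T₂ : Matrix (Fin n) (Fin n) ℂ,
      P * T₁ * Q * (P * T₂ * Q).adjugate = Q.det • (P * (T₁ * T₂.adjugate) * P.adjugate) := by
    intro T₁ T₂
    rw [adjugate_mul_distrib, adjugate_mul_distrib]
    simp only [Matrix.mul_assoc]
    rw [← Matrix.mul_assoc Q, mul_adjugate, smul_mul, Matrix.one_mul, Matrix.mul_smul,
      Matrix.mul_smul]
  rw [F1, F1, key, key, ← smul_sub, ← Matrix.sub_mul, ← Matrix.mul_sub, det_smul,
    det_mul_right_comm, det_mul, mul_adjugate, det_smul, det_one, Fintype.card_fin]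
  ring

theorem F1_conjTranspose_mul_mul {n : ℕ} {U : Matrix (Fin n) (Fin n) ℂ}
    (hU : U ∈ unitaryGroup (Fin n) ℂ) (S₁ S₂ : Matrix (Fin n) (Fin n) ℂ) :
    F1 (Uᴴ * S₁ * U) (Uᴴ * S₂ * U) = F1 S₁ S₂ := by
  rw [F1_mul_mul, ← det_mul, ← star_eq_conjTranspose, mem_unitaryGroup_iff'.mp hU, det_one,
    one_pow, one_mul]

def unitCompletion (v : Fin 2 → ℂ) : Matrix (Fin 2) (Fin 2) ℂ :=
  !![v 0, -star (v 1); v 1, star (v 0)]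

theorem unitCompletion_mulVec (v : Fin 2 → ℂ) : unitCompletion v *ᵥ ![1, 0] = v := by
  ext i; fin_cases i <;> simp [unitCompletion]

theorem det_unitCompletion (v : Fin 2 → ℂ) : (unitCompletion v).det = star v ⬝ᵥ v := by
  rw [unitCompletion, det_fin_two_of, dotProduct, Fin.sum_univ_two]
  simp only [Pi.star_apply]
  ring

theorem unitCompletion_mem_unitaryGroup {v : Fin 2 → ℂ} (hv : star v ⬝ᵥ v = 1) :
    unitCompletion v ∈ unitaryGroup (Fin 2) ℂ := by
  have hadj : (unitCompletion v)ᴴ = (unitCompletion v).adjugate := by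
    ext i j; fin_cases i <;> fin_cases j <;> simp [unitCompletion, adjugate_fin_two_of]
  rw [mem_unitaryGroup_iff', star_eq_conjTranspose, hadj, adjugate_mul, det_unitCompletion, hv,
    one_smul]

noncomputable def herm2 (a : ℝ) (b : ℂ) (d : ℝ) : Matrix (Fin 2) (Fin 2) ℂ :=
  !![(a : ℂ), b; star b, (d : ℂ)]

theorem Matrix.IsHermitian.eq_herm2 {S : Matrix (Fin 2) (Fin 2) ℂ} (h : S.IsHermitian) :
    S = herm2 (S 0 0).re (S 0 1) (S 1 1).re := by
  rw [herm2, Complex.conj_eq_iff_re.mp (h.apply 0 0), Complex.conj_eq_iff_re.mp (h.apply 1 1),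
    h.apply 1 0, ← eta_fin_two S]

theorem det_herm2 (a : ℝ) (b : ℂ) (d : ℝ) :
    (herm2 a b d).det = (a * d - Complex.normSq b : ℝ) := by
  rw [herm2, det_fin_two_of, Complex.star_def, mul_comm b, ← Complex.normSq_eq_conj_mul_self]
  push_cast
  ring

theorem hermForm_herm2 (a : ℝ) (b : ℂ) (d : ℝ) (x y : ℂ) :
    hermForm (herm2 a b d) ![x, y] =
      (a * Complex.normSq x + 2 * (star x * b * y).re + d * Complex.normSq y : ℝ) := by
  apply Complex.ext <;>
    simp [hermForm, herm2, Complex.normSq_apply, Complex.mul_re, Complex.mul_im] <;> ring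

theorem F1_herm2_zero_left (b₁ : ℂ) (d₁ a₂ : ℝ) (b₂ : ℂ) (d₂ : ℝ) :
    F1 (herm2 0 b₁ d₁) (herm2 a₂ b₂ d₂) =
      ((2 * (b₁ * star b₂).im) ^ 2 - a₂ ^ 2 * d₁ ^ 2 + 4 * a₂ * (b₁ * star b₂).re * d₁
        - 4 * a₂ * Complex.normSq b₁ * d₂ : ℝ) := by
  apply Complex.ext <;>
    simp [F1, herm2, adjugate_fin_two_of, det_fin_two_of, Complex.normSq_apply, Complex.mul_re,
      Complex.mul_im, pow_two] <;> ring

theorem exists_hermForm_herm2_eq_zero {a : ℝ} {b : ℂ} {d : ℝ} (hdet : (herm2 a b d).det ≤ 0) :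
    ∃ v ≠ 0, hermForm (herm2 a b d) v = 0 := by
  rw [det_herm2] at hdet
  have hdet' : a * d - Complex.normSq b ≤ 0 := by exact_mod_cast hdet
  by_cases ha : a = 0
  · exact ⟨![1, 0], by simp, by simp [hermForm_herm2, ha]⟩
  obtain ⟨η, hη⟩ : ∃ η : ℝ, η ^ 2 = Complex.normSq b - a * d := ⟨_, Real.sq_sqrt (by linarith)⟩
  refine ⟨![-b + η, a], by simp [ha], ?_⟩
  rw [hermForm_herm2, Complex.ofReal_eq_zero]
  simp only [Complex.normSq_apply, Complex.mul_re, Complex.mul_im, Complex.add_re, Complex.neg_re,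
    Complex.ofReal_re, Complex.add_im, Complex.neg_im, Complex.ofReal_im, Complex.star_def,
    Complex.conj_re, Complex.conj_im] at hη ⊢
  linear_combination a * hη

theorem exists_common_hermForm_herm2_eq_zero {b₁ : ℂ} {d₁ a₂ : ℝ} {b₂ : ℂ} {d₂ : ℝ}
    (hdet : (herm2 a₂ b₂ d₂).det ≤ 0) (hF : 0 ≤ F1 (herm2 0 b₁ d₁) (herm2 a₂ b₂ d₂)) :
    ∃ v ≠ 0, hermForm (herm2 0 b₁ d₁) v = 0 ∧ hermForm (herm2 a₂ b₂ d₂) v = 0 := by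
  rw [F1_herm2_zero_left] at hF
  set s := (b₁ * star b₂).re
  set t := (b₁ * star b₂).im
  set D := (2 * t) ^ 2 - a₂ ^ 2 * d₁ ^ 2 + 4 * a₂ * s * d₁ - 4 * a₂ * Complex.normSq b₁ * d₂
  have hD : 0 ≤ D := by exact_mod_cast hF
  by_cases ha₂ : a₂ = 0
  · exact ⟨![1, 0], by simp, by simp [hermForm_herm2, ha₂]⟩
  by_cases hb₁ : b₁ = 0
  · have hd₁ : d₁ = 0 := by
      simp only [D, s, t, hb₁, zero_mul, Complex.zero_re, Complex.zero_im, map_zero] at hD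
      have : (a₂ * d₁) ^ 2 = 0 := by nlinarith [sq_nonneg (a₂ * d₁)]
      exact (mul_eq_zero.mp (pow_eq_zero_iff two_ne_zero |>.mp this)).resolve_left ha₂
    obtain ⟨v, hv, hq⟩ := exists_hermForm_herm2_eq_zero hdet
    refine ⟨v, hv, ?_, hq⟩
    simp [hb₁, hd₁, herm2, hermForm]
  obtain ⟨e, he⟩ : ∃ e : ℝ, e ^ 2 = D := ⟨_, Real.sq_sqrt hD⟩
  -- With `y = 2 |b₁|² a₂`, the first form vanishes at `(b₁ w, y)` iff `Re w = -a₂ d₁`; the second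
  -- is then a quadratic equation in `Im w` with discriminant a positive multiple of `D`.
  refine ⟨![b₁ * ⟨-(a₂ * d₁), 2 * t + e⟩, (2 * Complex.normSq b₁ * a₂ : ℝ)], by simp [ha₂, hb₁],
    ?_, ?_⟩
  all_goals
    rw [hermForm_herm2, Complex.ofReal_eq_zero]
    simp only [D, s, t, Complex.normSq_apply, Complex.mul_re, Complex.mul_im, Complex.star_def,
      Complex.conj_re, Complex.conj_im, Complex.add_re, Complex.add_im, Complex.ofReal_re,
      Complex.ofReal_im, Complex.re_ofNat, Complex.im_ofNat, Complex.ofReal_mul,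
      Complex.ofReal_ofNat, Complex.ofReal_add] at he ⊢
  · ring
  · linear_combination a₂ * (b₁.re ^ 2 + b₁.im ^ 2) * he

theorem Matrix.IsHermitian.exists_unit_hermForm_eq_zero {S : Matrix (Fin 2) (Fin 2) ℂ}
    (h : S.IsHermitian) (hdet : S.det ≤ 0) : ∃ v, star v ⬝ᵥ v = 1 ∧ hermForm S v = 0 := by
  rw [h.eq_herm2] at hdet ⊢
  obtain ⟨v, hv, hq⟩ := exists_hermForm_herm2_eq_zero hdet
  obtain ⟨c, hc⟩ := exists_smul_unit hv
  exact ⟨c • v, hc, by rw [hermForm_smul, hq, mul_zero]⟩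

theorem Matrix.IsHermitian.exists_conj_unitCompletion_eq_herm2 {S : Matrix (Fin 2) (Fin 2) ℂ}
    (h : S.IsHermitian) {v : Fin 2 → ℂ} (hv : hermForm S v = 0) :
    ∃ b d, (unitCompletion v)ᴴ * S * unitCompletion v = herm2 0 b d := by
  set T := (unitCompletion v)ᴴ * S * unitCompletion v
  have hT : T.IsHermitian := isHermitian_conjTranspose_mul_mul _ h
  have h00 : (T 0 0).re = 0 := by
    have h : hermForm T ![1, 0] = 0 := by
      rw [hermForm_conjTranspose_mul_mul, unitCompletion_mulVec, hv]
    rw [hT.eq_herm2, hermForm_herm2] at h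
    simpa using h
  exact ⟨T 0 1, (T 1 1).re, h00 ▸ hT.eq_herm2⟩

theorem exists_unit_common_hermForm_eq_zero_iff {S₁ S₂ : Matrix (Fin 2) (Fin 2) ℂ}
    (h₁ : S₁.IsHermitian) (h₂ : S₂.IsHermitian) :
    (∃ v, star v ⬝ᵥ v = 1 ∧ hermForm S₁ v = 0 ∧ hermForm S₂ v = 0) ↔
      S₁.det ≤ 0 ∧ S₂.det ≤ 0 ∧ 0 ≤ F1 S₁ S₂ := by
  constructor
  · rintro ⟨v, hv, hq₁, hq₂⟩
    have hW := unitCompletion_mem_unitaryGroup hv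
    obtain ⟨b₁, d₁, e₁⟩ := h₁.exists_conj_unitCompletion_eq_herm2 hq₁
    obtain ⟨b₂, d₂, e₂⟩ := h₂.exists_conj_unitCompletion_eq_herm2 hq₂
    rw [← det_conjTranspose_mul_mul hW S₁, ← det_conjTranspose_mul_mul hW S₂,
      ← F1_conjTranspose_mul_mul hW, e₁, e₂, det_herm2, det_herm2, F1_herm2_zero_left]
    refine ⟨?_, ?_, ?_⟩ <;> norm_cast <;> simp [Complex.normSq_nonneg, sq_nonneg]
  · rintro ⟨hdet₁, hdet₂, hF⟩
    obtain ⟨v₀, hv₀, hq₀⟩ := h₁.exists_unit_hermForm_eq_zero hdet₁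
    have hW := unitCompletion_mem_unitaryGroup hv₀
    obtain ⟨b₁, d₁, e₁⟩ := h₁.exists_conj_unitCompletion_eq_herm2 hq₀
    have e₂ := (isHermitian_conjTranspose_mul_mul (unitCompletion v₀) h₂).eq_herm2
    obtain ⟨v, hv, hq₁, hq₂⟩ := exists_common_hermForm_herm2_eq_zero
      (by rw [← e₂, det_conjTranspose_mul_mul hW]; exact hdet₂)
      (by rw [← e₁, ← e₂, F1_conjTranspose_mul_mul hW]; exact hF)
    obtain ⟨c, hc⟩ := exists_smul_unit hv
    refine ⟨unitCompletion v₀ *ᵥ (c • v), by rwa [star_mulVec_dotProduct_mulVec hW], ?_, ?_⟩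
    · rw [← hermForm_conjTranspose_mul_mul, e₁, hermForm_smul, hq₁, mul_zero]
    · rw [← hermForm_conjTranspose_mul_mul, e₂, hermForm_smul, hq₂, mul_zero]

theorem blockTriangular_id_of_fin_two {α : Type*} [Zero α] {M : Matrix (Fin 2) (Fin 2) α}
    (h : M 1 0 = 0) : M.BlockTriangular id := by
  intro i j hij
  fin_cases i <;> fin_cases j <;> simp_all

theorem hermForm_eq_zero_of_triangular {A U V : Matrix (Fin 2) (Fin 2) ℂ}
    (hU : U ∈ unitaryGroup (Fin 2) ℂ) (hV : V ∈ unitaryGroup (Fin 2) ℂ) {r : ℝ}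
    (hT : (Uᴴ * A * V).BlockTriangular id) (h00 : (Uᴴ * A * V) 0 0 = r) :
    hermForm (Aᴴ * A - (r : ℂ) ^ 2 • 1) (V *ᵥ ![1, 0]) = 0 := by
  have hAv : A *ᵥ (V *ᵥ ![1, 0]) = (r : ℂ) • (U *ᵥ ![1, 0]) := by
    have h10 : (Uᴴ * A * V) 1 0 = 0 := hT (by decide)
    calc A *ᵥ (V *ᵥ ![1, 0]) = U *ᵥ ((Uᴴ * A * V) *ᵥ ![1, 0]) := by
          rw [mulVec_mulVec, mulVec_mulVec, ← Matrix.mul_assoc, ← Matrix.mul_assoc,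
            ← star_eq_conjTranspose, mem_unitaryGroup_iff.mp hU, Matrix.one_mul]
      _ = U *ᵥ ((r : ℂ) • ![1, 0]) := by
          congr 1; ext i; fin_cases i <;> simp [h00, h10]
      _ = (r : ℂ) • (U *ᵥ ![1, 0]) := mulVec_smul _ _ _
  rw [hermForm_conjTranspose_mul_self_sub_smul, hAv, ← hermForm_one, hermForm_smul, hermForm_one,
    star_mulVec_dotProduct_mulVec hU, star_mulVec_dotProduct_mulVec hV, Complex.star_def,
    Complex.conj_ofReal]
  ring

theorem exists_unitary_triangular_of_hermForm_eq_zero {A : Matrix (Fin 2) (Fin 2) ℂ}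
    (hA : A.det = 1) {r : ℝ} (hr : r ≠ 0) {v : Fin 2 → ℂ} (hv : star v ⬝ᵥ v = 1)
    (hq : hermForm (Aᴴ * A - (r : ℂ) ^ 2 • 1) v = 0) :
    ∃ U ∈ unitaryGroup (Fin 2) ℂ, (Uᴴ * A * unitCompletion v).BlockTriangular id ∧
      (Uᴴ * A * unitCompletion v) 0 0 = r ∧ (Uᴴ * A * unitCompletion v) 1 1 = (r : ℂ)⁻¹ := by
  have hr' : (r : ℂ) ≠ 0 := Complex.ofReal_ne_zero.mpr hr
  rw [hermForm_conjTranspose_mul_self_sub_smul, hv, mul_one, sub_eq_zero] at hq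
  set u := (r : ℂ)⁻¹ • (A *ᵥ v)
  have hAv : A *ᵥ v = (r : ℂ) • u := by rw [smul_inv_smul₀ hr']
  have hu : star u ⬝ᵥ u = 1 := by
    rw [← hermForm_one, hermForm_smul, hermForm_one, hq, star_inv₀, Complex.star_def,
      Complex.conj_ofReal]
    field_simp
  have hU := unitCompletion_mem_unitaryGroup hu
  set T := (unitCompletion u)ᴴ * A * unitCompletion v
  have hTe : T *ᵥ ![1, 0] = (r : ℂ) • ![1, 0] := by
    rw [← mulVec_mulVec, unitCompletion_mulVec, ← mulVec_mulVec, hAv, mulVec_smul]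
    nth_rewrite 2 [← unitCompletion_mulVec u]
    rw [mulVec_mulVec, ← star_eq_conjTranspose, mem_unitaryGroup_iff'.mp hU, one_mulVec]
  have h00 : T 0 0 = r := by simpa using congrFun hTe 0
  have h10 : T 1 0 = 0 := by simpa using congrFun hTe 1
  have hdet : T.det = 1 := by
    rw [det_mul, det_mul, det_conjTranspose, det_unitCompletion, det_unitCompletion, hu, hv, hA]
    simp
  refine ⟨unitCompletion u, hU, blockTriangular_id_of_fin_two h10, h00, ?_⟩
  rw [det_fin_two, h00, h10] at hdet
  field_simp
  linear_combination hdet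

/-- **Joint triangularization of two `2 × 2` matrices with diagonal `(r, 1/r)`.**
For complex `2 × 2` matrices `A₁, A₂` of unit determinant and `r > 0`, there exist unitary
matrices `U₁, U₂, V` such that both `U₁ᴴ * A₁ * V` and `U₂ᴴ * A₂ * V` are upper triangular
with diagonal entries `r` and `1/r` (in this order) iff `det(A₁ᴴA₁ − r²I) ≤ 0`,
`det(A₂ᴴA₂ − r²I) ≤ 0` and `F₁(A₁ᴴA₁ − r²I, A₂ᴴA₂ − r²I) ≥ 0`. -/
theorem two_joint_triangularization_r (A₁ A₂ : Matrix (Fin 2) (Fin 2) ℂ)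
    (h₁ : A₁.det = 1) (h₂ : A₂.det = 1) (r : ℝ) (hr : 0 < r) :
    (∃ U₁ U₂ V : Matrix (Fin 2) (Fin 2) ℂ,
        U₁ ∈ Matrix.unitaryGroup (Fin 2) ℂ ∧ U₂ ∈ Matrix.unitaryGroup (Fin 2) ℂ ∧
        V ∈ Matrix.unitaryGroup (Fin 2) ℂ ∧
        (U₁ᴴ * A₁ * V).BlockTriangular id ∧
        (U₁ᴴ * A₁ * V) 0 0 = (r : ℂ) ∧ (U₁ᴴ * A₁ * V) 1 1 = ((r : ℂ))⁻¹ ∧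
        (U₂ᴴ * A₂ * V).BlockTriangular id ∧
        (U₂ᴴ * A₂ * V) 0 0 = (r : ℂ) ∧ (U₂ᴴ * A₂ * V) 1 1 = ((r : ℂ))⁻¹) ↔
      ((A₁ᴴ * A₁ - ((r : ℂ) ^ 2) • 1).det ≤ 0 ∧
        (A₂ᴴ * A₂ - ((r : ℂ) ^ 2) • 1).det ≤ 0 ∧
        0 ≤ F1 (A₁ᴴ * A₁ - ((r : ℂ) ^ 2) • 1) (A₂ᴴ * A₂ - ((r : ℂ) ^ 2) • 1)) := by
  have hS (A : Matrix (Fin 2) (Fin 2) ℂ) : (Aᴴ * A - ((r : ℂ) ^ 2) • 1).IsHermitian :=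
    (isHermitian_conjTranspose_mul_self A).sub
      (isHermitian_one.smul (by simp [IsSelfAdjoint]))
  rw [← exists_unit_common_hermForm_eq_zero_iff (hS A₁) (hS A₂)]
  constructor
  · rintro ⟨U₁, U₂, V, hU₁, hU₂, hV, hT₁, h₁₀₀, -, hT₂, h₂₀₀, -⟩
    refine ⟨V *ᵥ ![1, 0], ?_, hermForm_eq_zero_of_triangular hU₁ hV hT₁ h₁₀₀,
      hermForm_eq_zero_of_triangular hU₂ hV hT₂ h₂₀₀⟩
    rw [star_mulVec_dotProduct_mulVec hV]
    simp [dotProduct]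
  · rintro ⟨v, hv, hq₁, hq₂⟩
    obtain ⟨U₁, hU₁, hT₁, h₁₀₀, h₁₁₁⟩ :=
      exists_unitary_triangular_of_hermForm_eq_zero h₁ hr.ne' hv hq₁
    obtain ⟨U₂, hU₂, hT₂, h₂₀₀, h₂₁₁⟩ :=
      exists_unitary_triangular_of_hermForm_eq_zero h₂ hr.ne' hv hq₂
    exact ⟨U₁, U₂, unitCompletion v, hU₁, hU₂, unitCompletion_mem_unitaryGroup hv,
      hT₁, h₁₀₀, h₁₁₁, hT₂, h₂₀₀, h₂₁₁⟩
end

section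
/- Let A_1 and A_2 be complex 2×2 matrices with det A_1 = det A_2 = 1 such that F_1(A_1†A_1 − I, A_2†A_2 − I) < 0. For N ∈ ℕ define the time-extended matrices 𝒜_k = I_N ⊗ A_k (the 2N×2N block-diagonal matrix with N copies of A_k on the diagonal), k = 1,2. Then for every N ∈ ℕ there do not exist 2N×2N complex unitary matrices 𝒰_1, 𝒰_2, 𝒱 such that both 𝒰_1† 𝒜_1 𝒱 and 𝒰_2† 𝒜_2 𝒱 are upper-triangular with all diagonal entries equal to 1. -/
/-!
If `Rₖ = 𝒰ₖᴴ 𝒜ₖ 𝒱` is unit upper triangular, its first column is `e₀`, so `𝒜ₖ v = 𝒰ₖ e₀` for the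
unit vector `v = 𝒱 e₀`. Hence `v` is isotropic for both Hermitian forms `I_N ⊗ Sₖ`, where
`Sₖ = Aₖᴴ Aₖ - I`. On the other hand `det (x S₁ + y S₂)` is a real binary quadratic form in `(x, y)`
whose discriminant is `-F₁(S₁, S₂) > 0`, so it takes a positive value; a Hermitian `2 × 2` matrix
of positive determinant is definite, so some real combination `P` of `S₁, S₂` is positive
definite. Then `I_N ⊗ P` is positive definite, yet `v` is isotropic for it.
-/

open Matrix ComplexOrder

/-- The time-extended matrix `I_N ⊗ A`: the `2N × 2N` block-diagonal matrix with `N` copies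
of the `2 × 2` matrix `A` on the diagonal, reindexed by `Fin (2 * N)`. -/
noncomputable def timeExtend (N : ℕ) (A : Matrix (Fin 2) (Fin 2) ℂ) :
    Matrix (Fin (2 * N)) (Fin (2 * N)) ℂ :=
  Matrix.reindex finProdFinEquiv finProdFinEquiv
    (Matrix.blockDiagonal fun _ : Fin N => A)

open scoped Kronecker

namespace Matrix

section Triangular

variable {α : Type*} [CommRing α] [StarRing α] {n : ℕ} [NeZero n]

lemma BlockTriangular.conjTranspose_mul_self_zero_zero {R : Matrix (Fin n) (Fin n) α}
    (hR : R.BlockTriangular id) : (Rᴴ * R) 0 0 = star (R 0 0) * R 0 0 := by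
  rw [mul_apply, Finset.sum_eq_single 0]
  · rfl
  · intro i _ hi
    rw [hR (Fin.pos_iff_ne_zero.mpr hi), mul_zero]
  · simp

lemma conjTranspose_mul_mul_zero_zero (V Y : Matrix (Fin n) (Fin n) α) :
    (Vᴴ * Y * V) 0 0 = star (V.col 0) ⬝ᵥ Y *ᵥ V.col 0 :=
  mul_mul_apply _ _ _ _ _

lemma star_col_zero_dotProduct_col_zero {V : Matrix (Fin n) (Fin n) α}
    (hV : V ∈ unitaryGroup (Fin n) α) : star (V.col 0) ⬝ᵥ V.col 0 = 1 := by
  have h := conjTranspose_mul_mul_zero_zero V 1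
  rwa [Matrix.mul_one, ← star_eq_conjTranspose, mem_unitaryGroup_iff'.mp hV, one_mulVec,
    one_apply_eq, eq_comm] at h

lemma star_col_zero_dotProduct_conjTranspose_mul_self_mulVec {U V X : Matrix (Fin n) (Fin n) α}
    (hU : U ∈ unitaryGroup (Fin n) α) (hR : (Uᴴ * X * V).BlockTriangular id)
    (hR₀ : (Uᴴ * X * V) 0 0 = 1) :
    star (V.col 0) ⬝ᵥ (Xᴴ * X) *ᵥ V.col 0 = 1 := by
  have hUU : U * Uᴴ = 1 := mem_unitaryGroup_iff.mp hU
  have hgram : (Uᴴ * X * V)ᴴ * (Uᴴ * X * V) = Vᴴ * (Xᴴ * X) * V := by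
    simp only [conjTranspose_mul, conjTranspose_conjTranspose, Matrix.mul_assoc]
    rw [← Matrix.mul_assoc U, hUU, Matrix.one_mul]
  rw [← conjTranspose_mul_mul_zero_zero, ← hgram, hR.conjTranspose_mul_self_zero_zero, hR₀,
    star_one, mul_one]

lemma star_col_zero_dotProduct_conjTranspose_mul_self_sub_one_mulVec
    {U V X : Matrix (Fin n) (Fin n) α} (hU : U ∈ unitaryGroup (Fin n) α)
    (hV : V ∈ unitaryGroup (Fin n) α) (hR : (Uᴴ * X * V).BlockTriangular id)
    (hR₀ : (Uᴴ * X * V) 0 0 = 1) :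
    star (V.col 0) ⬝ᵥ (Xᴴ * X - 1) *ᵥ V.col 0 = 0 := by
  rw [sub_mulVec, dotProduct_sub, one_mulVec,
    star_col_zero_dotProduct_conjTranspose_mul_self_mulVec hU hR hR₀,
    star_col_zero_dotProduct_col_zero hV, sub_self]

end Triangular

lemma det_fin_two_smul_add {α : Type*} [CommRing α] (c : α) (X Y : Matrix (Fin 2) (Fin 2) α) :
    (c • X + Y).det = c ^ 2 * X.det + c * ((X + Y).det - X.det - Y.det) + Y.det := by
  simp only [det_fin_two, add_apply, smul_apply, smul_eq_mul]
  ring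

section Hermitian

variable {𝕜 : Type*} [RCLike 𝕜] {M : Matrix (Fin 2) (Fin 2) 𝕜}

lemma IsHermitian.posDef_of_det_pos_of_trace_pos (hM : M.IsHermitian) (hdet : 0 < M.det)
    (htr : 0 < M.trace) : M.PosDef := by
  rw [hM.det_eq_prod_eigenvalues, Fin.prod_univ_two, ← RCLike.ofReal_mul,
    RCLike.ofReal_pos] at hdet
  rw [hM.trace_eq_sum_eigenvalues, Fin.sum_univ_two, ← RCLike.ofReal_add,
    RCLike.ofReal_pos] at htr
  rw [hM.posDef_iff_eigenvalues_pos, Fin.forall_fin_two]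
  constructor <;> nlinarith

lemma IsHermitian.posDef_or_neg_posDef_of_det_pos (hM : M.IsHermitian) (hdet : 0 < M.det) :
    M.PosDef ∨ (-M).PosDef := by
  have hdet_neg : 0 < (-M).det := by simpa [det_neg] using hdet
  have htr : M.trace = ((hM.eigenvalues 0 + hM.eigenvalues 1 : ℝ) : 𝕜) := by
    rw [hM.trace_eq_sum_eigenvalues, Fin.sum_univ_two, RCLike.ofReal_add]
  have hprod : 0 < hM.eigenvalues 0 * hM.eigenvalues 1 := by
    rwa [hM.det_eq_prod_eigenvalues, Fin.prod_univ_two, ← RCLike.ofReal_mul,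
      RCLike.ofReal_pos] at hdet
  have htr_ne : hM.eigenvalues 0 + hM.eigenvalues 1 ≠ 0 := by
    intro h
    rw [show hM.eigenvalues 1 = -hM.eigenvalues 0 by linarith] at hprod
    nlinarith [sq_nonneg (hM.eigenvalues 0)]
  rcases htr_ne.lt_or_gt with h | h
  · refine .inr (hM.neg.posDef_of_det_pos_of_trace_pos hdet_neg ?_)
    rw [trace_neg, htr, ← RCLike.ofReal_neg, RCLike.ofReal_pos]
    linarith
  · exact .inl (hM.posDef_of_det_pos_of_trace_pos hdet (by rwa [htr, RCLike.ofReal_pos]))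

end Hermitian

lemma IsHermitian.exists_det_eq_ofReal {n : Type*} [Fintype n] [DecidableEq n]
    {X : Matrix n n ℂ} (hX : X.IsHermitian) :
    ∃ r : ℝ, X.det = r :=
  Complex.conj_eq_iff_real.mp (by rw [← Complex.star_def, ← det_conjTranspose, hX.eq])

end Matrix

lemma F1_fin_two (X Y : Matrix (Fin 2) (Fin 2) ℂ) :
    F1 X Y = 4 * X.det * Y.det - ((X + Y).det - X.det - Y.det) ^ 2 := by
  simp only [F1, adjugate_fin_two, det_fin_two, Matrix.sub_apply, Matrix.add_apply, mul_apply,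
    Fin.sum_univ_two, of_apply, cons_val', cons_val_zero, cons_val_one, cons_val_fin_one]
  ring

lemma exists_posDef_smul_add_smul_of_F1_neg {S₁ S₂ : Matrix (Fin 2) (Fin 2) ℂ}
    (hS₁ : S₁.IsHermitian) (hS₂ : S₂.IsHermitian) (hF : F1 S₁ S₂ < 0) :
    ∃ a b : ℂ, (a • S₁ + b • S₂).PosDef := by
  obtain ⟨δ₁, hδ₁⟩ := hS₁.exists_det_eq_ofReal
  obtain ⟨δ₂, hδ₂⟩ := hS₂.exists_det_eq_ofReal
  obtain ⟨δ, hδ⟩ := (hS₁.add hS₂).exists_det_eq_ofReal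
  have hF' : 4 * δ₁ * δ₂ - (δ - δ₁ - δ₂) ^ 2 < 0 := by
    rw [F1_fin_two, hδ₁, hδ₂, hδ] at hF
    exact_mod_cast hF
  obtain ⟨x, hx⟩ : ∃ x : ℝ, 0 < δ₁ * (x * x) + (δ - δ₁ - δ₂) * x + δ₂ := by
    by_contra! h
    have hdisc := discrim_le_zero_of_nonpos h
    rw [discrim] at hdisc
    linarith
  have hM : ((x : ℂ) • S₁ + S₂).IsHermitian := (hS₁.smul (Complex.conj_ofReal x)).add hS₂
  have hdet : 0 < ((x : ℂ) • S₁ + S₂).det := by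
    rw [det_fin_two_smul_add, hδ₁, hδ₂, hδ]
    exact_mod_cast (show (0 : ℝ) < _ by nlinarith)
  rcases hM.posDef_or_neg_posDef_of_det_pos hdet with h | h
  · exact ⟨x, 1, by rwa [one_smul]⟩
  · exact ⟨-x, -1, by rwa [neg_smul, neg_one_smul, ← neg_add]⟩

section TimeExtend

variable (N : ℕ)

lemma timeExtend_eq_kronecker (A : Matrix (Fin 2) (Fin 2) ℂ) :
    timeExtend N A =
      reindex finProdFinEquiv finProdFinEquiv (A ⊗ₖ (1 : Matrix (Fin N) (Fin N) ℂ)) := by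
  rw [timeExtend, kronecker_one]

lemma timeExtend_mul (A B : Matrix (Fin 2) (Fin 2) ℂ) :
    timeExtend N (A * B) = timeExtend N A * timeExtend N B := by
  simp only [timeExtend_eq_kronecker, reindex_apply, submatrix_mul_equiv, ← mul_kronecker_mul,
    Matrix.mul_one]

lemma timeExtend_conjTranspose (A : Matrix (Fin 2) (Fin 2) ℂ) :
    timeExtend N Aᴴ = (timeExtend N A)ᴴ := by
  simp only [timeExtend_eq_kronecker, reindex_apply, conjTranspose_submatrix,
    conjTranspose_kronecker, conjTranspose_one]

lemma timeExtend_one : timeExtend N 1 = 1 := by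
  simp only [timeExtend_eq_kronecker, one_kronecker_one, reindex_apply, submatrix_one_equiv]

lemma timeExtend_add (A B : Matrix (Fin 2) (Fin 2) ℂ) :
    timeExtend N (A + B) = timeExtend N A + timeExtend N B := by
  simp only [timeExtend_eq_kronecker, add_kronecker]
  rfl

lemma timeExtend_smul (c : ℂ) (A : Matrix (Fin 2) (Fin 2) ℂ) :
    timeExtend N (c • A) = c • timeExtend N A := by
  simp only [timeExtend_eq_kronecker, smul_kronecker]
  rfl

lemma timeExtend_sub (A B : Matrix (Fin 2) (Fin 2) ℂ) :
    timeExtend N (A - B) = timeExtend N A - timeExtend N B := by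
  rw [sub_eq_add_neg, sub_eq_add_neg, ← neg_one_smul ℂ B, timeExtend_add, timeExtend_smul,
    neg_one_smul]

lemma timeExtend_conjTranspose_mul_self_sub_one (A : Matrix (Fin 2) (Fin 2) ℂ) :
    timeExtend N (Aᴴ * A - 1) = (timeExtend N A)ᴴ * timeExtend N A - 1 := by
  rw [timeExtend_sub, timeExtend_mul, timeExtend_conjTranspose, timeExtend_one]

variable {N}

lemma Matrix.PosDef.timeExtend {A : Matrix (Fin 2) (Fin 2) ℂ} (hA : A.PosDef) :
    (timeExtend N A).PosDef := by
  rw [timeExtend_eq_kronecker, reindex_apply]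
  exact (hA.kronecker PosDef.one).submatrix finProdFinEquiv.symm.injective

end TimeExtend

theorem no_time_extended_two_gmd_general (A₁ A₂ : Matrix (Fin 2) (Fin 2) ℂ)
    (hF : F1 (A₁ᴴ * A₁ - 1) (A₂ᴴ * A₂ - 1) < 0) (N : ℕ) (hN : 0 < N) :
    ¬ ∃ U₁ U₂ V : Matrix (Fin (2 * N)) (Fin (2 * N)) ℂ,
        U₁ ∈ Matrix.unitaryGroup (Fin (2 * N)) ℂ ∧
        U₂ ∈ Matrix.unitaryGroup (Fin (2 * N)) ℂ ∧
        V ∈ Matrix.unitaryGroup (Fin (2 * N)) ℂ ∧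
        (U₁ᴴ * timeExtend N A₁ * V).BlockTriangular id ∧
        (∀ j, (U₁ᴴ * timeExtend N A₁ * V) j j = 1) ∧
        (U₂ᴴ * timeExtend N A₂ * V).BlockTriangular id ∧
        (∀ j, (U₂ᴴ * timeExtend N A₂ * V) j j = 1) := by
  have : NeZero (2 * N) := ⟨by omega⟩
  rintro ⟨U₁, U₂, V, hU₁, hU₂, hV, hT₁, hD₁, hT₂, hD₂⟩
  obtain ⟨a, b, hP⟩ := exists_posDef_smul_add_smul_of_F1_neg
    ((isHermitian_conjTranspose_mul_self A₁).sub isHermitian_one)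
    ((isHermitian_conjTranspose_mul_self A₂).sub isHermitian_one) hF
  have hv : V.col 0 ≠ 0 := fun h ↦ by
    simpa [h] using star_col_zero_dotProduct_col_zero hV
  have h₁ := star_col_zero_dotProduct_conjTranspose_mul_self_sub_one_mulVec hU₁ hV hT₁ (hD₁ 0)
  have h₂ := star_col_zero_dotProduct_conjTranspose_mul_self_sub_one_mulVec hU₂ hV hT₂ (hD₂ 0)
  have hpos := hP.timeExtend.dotProduct_mulVec_pos hv
  rw [timeExtend_add, timeExtend_smul, timeExtend_smul, timeExtend_conjTranspose_mul_self_sub_one,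
    timeExtend_conjTranspose_mul_self_sub_one, add_mulVec, smul_mulVec, smul_mulVec,
    dotProduct_add, dotProduct_smul, dotProduct_smul, h₁, h₂, smul_zero, smul_zero, add_zero] at hpos
  exact hpos.false

/-- **Time extensions do not enable a perfect 2-GMD of `2 × 2` matrices.**
If `A₁, A₂` are complex `2 × 2` matrices of unit determinant with
`F₁(A₁ᴴA₁ − I, A₂ᴴA₂ − I) < 0` (i.e. no perfect 2-GMD of `A₁, A₂` exists), then for every
`N ≥ 1` there are no unitary `𝒰₁, 𝒰₂, 𝒱` making both `𝒰₁ᴴ (I_N ⊗ A₁) 𝒱` and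
`𝒰₂ᴴ (I_N ⊗ A₂) 𝒱` upper triangular with all diagonal entries equal to `1`. -/
theorem no_time_extended_two_gmd (A₁ A₂ : Matrix (Fin 2) (Fin 2) ℂ)
    (h₁ : A₁.det = 1) (h₂ : A₂.det = 1)
    (hF : F1 (A₁ᴴ * A₁ - 1) (A₂ᴴ * A₂ - 1) < 0) (N : ℕ) (hN : 0 < N) :
    ¬ ∃ U₁ U₂ V : Matrix (Fin (2 * N)) (Fin (2 * N)) ℂ,
        U₁ ∈ Matrix.unitaryGroup (Fin (2 * N)) ℂ ∧
        U₂ ∈ Matrix.unitaryGroup (Fin (2 * N)) ℂ ∧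
        V ∈ Matrix.unitaryGroup (Fin (2 * N)) ℂ ∧
        (U₁ᴴ * timeExtend N A₁ * V).BlockTriangular id ∧
        (∀ j, (U₁ᴴ * timeExtend N A₁ * V) j j = 1) ∧
        (U₂ᴴ * timeExtend N A₂ * V).BlockTriangular id ∧
        (∀ j, (U₂ᴴ * timeExtend N A₂ * V) j j = 1) :=
  no_time_extended_two_gmd_general A₁ A₂ hF N hN
end

section
/- Let c_1, c_2, c_3, c_4 be real numbers. Then there exist real numbers x_1, x_2, y_1, y_2 satisfying the four equations x_1² + x_2² = c_1, 2(x_1y_1 + x_2y_2) = c_2, 2(x_2y_1 − x_1y_2) = c_3, and y_1² + y_2² = c_4, if and only if c_1 ≥ 0, c_4 ≥ 0, and 4·c_1·c_4 = c_2² + c_3². -/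
/-!
With `z = x₁ + i x₂` and `w = y₁ + i y₂` the system reads `|z|² = c₁`, `|w|² = c₄` and
`2 z w̄ = c₂ + i c₃`, so necessity is the multiplicativity of `|·|²`. Conversely, take
`z = √c₁` and `w = (c₂ - i c₃) / (2√c₁)`, or `z = 0`, `w = √c₄` when `c₁ = 0`.
-/

open Complex ComplexConjugate

theorem Complex.exists_normSq_eq_and_mul_conj_eq_iff (a b : ℝ) (p : ℂ) :
    (∃ z w : ℂ, normSq z = a ∧ normSq w = b ∧ z * conj w = p) ↔
      0 ≤ a ∧ 0 ≤ b ∧ normSq p = a * b := by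
  constructor
  · rintro ⟨z, w, rfl, rfl, rfl⟩
    exact ⟨normSq_nonneg z, normSq_nonneg w, by rw [map_mul, normSq_conj]⟩
  · rintro ⟨ha, hb, hp⟩
    rcases ha.eq_or_lt with rfl | ha
    · refine ⟨0, Real.sqrt b, map_zero normSq, ?_, ?_⟩
      · rw [normSq_ofReal, Real.mul_self_sqrt hb]
      · rw [zero_mul, eq_comm, ← normSq_eq_zero, hp, zero_mul]
    · have hsqrt : (Real.sqrt a : ℂ) ≠ 0 := ofReal_ne_zero.mpr (Real.sqrt_pos.mpr ha).ne'
      refine ⟨Real.sqrt a, conj p / Real.sqrt a, ?_, ?_, ?_⟩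
      · rw [normSq_ofReal, Real.mul_self_sqrt ha.le]
      · rw [map_div₀, normSq_conj, normSq_ofReal, Real.mul_self_sqrt ha.le, hp]
        field_simp
      · rw [map_div₀, conj_conj, conj_ofReal]
        field_simp

theorem quadratic_system_iff_exists_complex (c₁ c₂ c₃ c₄ : ℝ) :
    (∃ x₁ x₂ y₁ y₂ : ℝ,
        x₁ ^ 2 + x₂ ^ 2 = c₁ ∧
        2 * (x₁ * y₁ + x₂ * y₂) = c₂ ∧
        2 * (x₂ * y₁ - x₁ * y₂) = c₃ ∧
        y₁ ^ 2 + y₂ ^ 2 = c₄) ↔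
      ∃ z w : ℂ, normSq z = c₁ ∧ normSq w = c₄ ∧ z * conj w = ⟨c₂ / 2, c₃ / 2⟩ := by
  simp only [normSq_apply, Complex.ext_iff, mul_re, mul_im, conj_re, conj_im]
  constructor
  · rintro ⟨x₁, x₂, y₁, y₂, hc₁, hc₂, hc₃, hc₄⟩
    exact ⟨⟨x₁, x₂⟩, ⟨y₁, y₂⟩, by simp only; linear_combination hc₁,
      by simp only; linear_combination hc₄, by simp only; constructor <;> linarith⟩
  · rintro ⟨z, w, hc₁, hc₄, hc₂, hc₃⟩
    exact ⟨z.re, z.im, w.re, w.im, by linear_combination hc₁, by linear_combination 2 * hc₂,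
      by linear_combination 2 * hc₃, by linear_combination hc₄⟩

/-- Solvability criterion for the quadratic system arising in the 2-GMD existence proof:
there exist reals `x₁, x₂, y₁, y₂` with `x₁² + x₂² = c₁`, `2(x₁y₁ + x₂y₂) = c₂`,
`2(x₂y₁ − x₁y₂) = c₃` and `y₁² + y₂² = c₄` iff `c₁ ≥ 0`, `c₄ ≥ 0` and
`4·c₁·c₄ = c₂² + c₃²`. -/
theorem quadratic_system_solvable (c₁ c₂ c₃ c₄ : ℝ) :
    (∃ x₁ x₂ y₁ y₂ : ℝ,
        x₁ ^ 2 + x₂ ^ 2 = c₁ ∧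
        2 * (x₁ * y₁ + x₂ * y₂) = c₂ ∧
        2 * (x₂ * y₁ - x₁ * y₂) = c₃ ∧
        y₁ ^ 2 + y₂ ^ 2 = c₄) ↔
      (0 ≤ c₁ ∧ 0 ≤ c₄ ∧ 4 * c₁ * c₄ = c₂ ^ 2 + c₃ ^ 2) := by
  rw [quadratic_system_iff_exists_complex, exists_normSq_eq_and_mul_conj_eq_iff, normSq_mk]
  constructor <;> rintro ⟨h₁, h₄, h⟩ <;> exact ⟨h₁, h₄, by linarith⟩
end

section
/- Let c_5, c_6, c_7 be real numbers. Then there exist real numbers x_1, x_2, y_1, y_2 satisfying the three equations x_1² + x_2² = c_5, 2(x_2y_1 − x_1y_2) = c_6, and y_1² + y_2² = c_7, if and only if c_5 ≥ 0, c_7 ≥ 0, and 4·c_5·c_7 − c_6² ≥ 0. -/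
/-! Over the reals, `(x₁² + x₂²)(y₁² + y₂²) = (x₁y₁ + x₂y₂)² + (x₂y₁ − x₁y₂)²` (Brahmagupta–Fibonacci),
so `4c₅c₇ − c₆²` is a square whenever the system is solvable. Conversely, take `x = (√c₅, 0)`;
the middle equation then fixes `y₂ = −c₆ / (2√c₅)`, and `c₆² ≤ 4c₅c₇` is exactly what leaves room
for `y₁ = √(c₇ − y₂²)`. -/

theorem sq_two_mul_sub_mul_le {R : Type*} [CommRing R] [LinearOrder R] [IsStrictOrderedRing R]
    (x₁ x₂ y₁ y₂ : R) :
    (2 * (x₂ * y₁ - x₁ * y₂)) ^ 2 ≤ 4 * (x₁ ^ 2 + x₂ ^ 2) * (y₁ ^ 2 + y₂ ^ 2) := by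
  have lagrange := sq_add_sq_mul_sq_add_sq (x₁ := x₁) (x₂ := -x₂) (y₁ := y₁) (y₂ := y₂)
  linarith [sq_nonneg (x₁ * y₁ - -x₂ * y₂)]

theorem exists_mul_eq_and_sq_le {K : Type*} [Field K] [LinearOrder K] [IsStrictOrderedRing K]
    {a b c : K} (hc : 0 ≤ c) (hb : b ^ 2 ≤ a ^ 2 * c) : ∃ t, a * t = b ∧ t ^ 2 ≤ c := by
  rcases eq_or_ne a 0 with rfl | ha
  · exact ⟨0, by nlinarith [sq_nonneg b], by simpa using hc⟩
  · refine ⟨b / a, mul_div_cancel₀ b ha, ?_⟩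
    rw [div_pow, div_le_iff₀ (by positivity), mul_comm]
    exact hb

/-- Solvability criterion for the reduced quadratic system in the 2-GMD existence proof:
there exist reals `x₁, x₂, y₁, y₂` with `x₁² + x₂² = c₅`, `2(x₂y₁ − x₁y₂) = c₆` and
`y₁² + y₂² = c₇` iff `c₅ ≥ 0`, `c₇ ≥ 0` and `4·c₅·c₇ − c₆² ≥ 0`. -/
theorem reduced_quadratic_system_solvable (c₅ c₆ c₇ : ℝ) :
    (∃ x₁ x₂ y₁ y₂ : ℝ,
        x₁ ^ 2 + x₂ ^ 2 = c₅ ∧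
        2 * (x₂ * y₁ - x₁ * y₂) = c₆ ∧
        y₁ ^ 2 + y₂ ^ 2 = c₇) ↔
      (0 ≤ c₅ ∧ 0 ≤ c₇ ∧ 0 ≤ 4 * c₅ * c₇ - c₆ ^ 2) := by
  constructor
  · rintro ⟨x₁, x₂, y₁, y₂, rfl, rfl, rfl⟩
    exact ⟨by positivity, by positivity, sub_nonneg.mpr (sq_two_mul_sub_mul_le x₁ x₂ y₁ y₂)⟩
  · rintro ⟨h₅, h₇, h⟩
    have hs : √c₅ ^ 2 = c₅ := Real.sq_sqrt h₅
    obtain ⟨t, ht, htc⟩ := exists_mul_eq_and_sq_le (a := 2 * √c₅) (b := -c₆) h₇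
      (by rw [mul_pow, hs]; linarith)
    refine ⟨√c₅, 0, √(c₇ - t ^ 2), t, by simp [hs], by linarith, ?_⟩
    rw [Real.sq_sqrt (sub_nonneg.mpr htc)]
    ring
end

section
/- Let N ≥ 2 be an integer and let c_1, c_2, c_3, c_4 be real numbers. Then there exist real numbers x_1,…,x_{2N}, y_1,…,y_{2N} satisfying the four equations ∑_{j=1}^{N}(x_{2j−1}² + x_{2j}²) = c_1, 2∑_{j=1}^{N}(x_{2j−1}y_{2j−1} + x_{2j}y_{2j}) = c_2, 2∑_{j=1}^{N}(x_{2j}y_{2j−1} − x_{2j−1}y_{2j}) = c_3, and ∑_{j=1}^{N}(y_{2j−1}² + y_{2j}²) = c_4, if and only if c_1 ≥ 0, c_4 ≥ 0, and 4·c_1·c_4 ≥ c_2² + c_3². -/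
/-!
Pairing coordinates, `z_j = x_{2j-1} + i x_{2j}` and `w_j = y_{2j-1} + i y_{2j}`, turns the
system into `‖z‖² = c₁`, `⟪z, w⟫ = (c₂ - i c₃) / 2`, `‖w‖² = c₄` for vectors `z, w ∈ ℂᴺ`.
Necessity is Cauchy–Schwarz. Conversely, as soon as there are two orthonormal vectors `e₀, e₁`,
any Gram data with `|γ|² ≤ a b` is realised by `u = √a e₀` and a `v` whose `e₀`-component
fixes the inner product and whose `e₁`-component makes up the missing length; in `ℂ¹` that
second direction is missing, which is why `N ≥ 2` is needed.
-/

open scoped InnerProductSpace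

section GramRealization

variable {𝕜 E : Type*} [RCLike 𝕜] [NormedAddCommGroup E] [InnerProductSpace 𝕜 E]

/-- When `a = 0` the junk value `γ / √0 = 0` is harmless, since then `γ = 0`. -/
theorem exists_sq_norm_inner_sq_norm_eq {e : Fin 2 → E} (he : Orthonormal 𝕜 e) {a b : ℝ} {γ : 𝕜}
    (ha : 0 ≤ a) (hb : 0 ≤ b) (hγ : ‖γ‖ ^ 2 ≤ a * b) :
    ∃ u v : E, ‖u‖ ^ 2 = a ∧ ⟪u, v⟫_𝕜 = γ ∧ ‖v‖ ^ 2 = b := by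
  have hr : 0 ≤ b - ‖γ‖ ^ 2 / a := by
    rcases ha.eq_or_lt with rfl | ha
    · simpa using hb
    · rw [sub_nonneg, div_le_iff₀ ha]
      linarith
  have hγs : (√a : 𝕜) * (γ / √a) = γ := by
    rcases ha.eq_or_lt with rfl | ha
    · obtain rfl : γ = 0 := by simpa using hγ
      simp
    · exact mul_div_cancel₀ γ (by exact_mod_cast (Real.sqrt_pos.mpr ha).ne')
  have he₀ : ⟪e 0, e 0⟫_𝕜 = 1 := by simp [he.1 0]
  have he₀₁ : ⟪e 0, e 1⟫_𝕜 = 0 := he.2 (by decide)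
  refine ⟨(√a : 𝕜) • e 0, (γ / √a) • e 0 + (√(b - ‖γ‖ ^ 2 / a) : 𝕜) • e 1, ?_, ?_, ?_⟩
  · rw [norm_smul, he.1 0, mul_one, RCLike.norm_ofReal, abs_of_nonneg (Real.sqrt_nonneg a),
      Real.sq_sqrt ha]
  · rw [inner_add_right, inner_smul_left, inner_smul_right, inner_smul_left, inner_smul_right,
      he₀, he₀₁, RCLike.conj_ofReal, mul_one, mul_zero, mul_zero, add_zero, hγs]
  · have hperp : ⟪(γ / √a) • e 0, (√(b - ‖γ‖ ^ 2 / a) : 𝕜) • e 1⟫_𝕜 = 0 := by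
      simp [inner_smul_left, inner_smul_right, he₀₁]
    rw [sq, norm_add_sq_eq_norm_sq_add_norm_sq_of_inner_eq_zero _ _ hperp, ← sq, ← sq,
      norm_smul, norm_smul, he.1 0, he.1 1, norm_div, RCLike.norm_ofReal, RCLike.norm_ofReal,
      abs_of_nonneg (Real.sqrt_nonneg _), abs_of_nonneg (Real.sqrt_nonneg _)]
    simp only [mul_one, div_pow, Real.sq_sqrt ha, Real.sq_sqrt hr]
    ring

theorem exists_sq_norm_inner_sq_norm_eq_iff {e : Fin 2 → E} (he : Orthonormal 𝕜 e)
    {a b : ℝ} {γ : 𝕜} :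
    (∃ u v : E, ‖u‖ ^ 2 = a ∧ ⟪u, v⟫_𝕜 = γ ∧ ‖v‖ ^ 2 = b) ↔
      0 ≤ a ∧ 0 ≤ b ∧ ‖γ‖ ^ 2 ≤ a * b := by
  constructor
  · rintro ⟨u, v, rfl, rfl, rfl⟩
    refine ⟨by positivity, by positivity, ?_⟩
    rw [← mul_pow]
    gcongr
    exact norm_inner_le_norm u v
  · rintro ⟨ha, hb, hγ⟩
    exact exists_sq_norm_inner_sq_norm_eq he ha hb hγ

end GramRealization

def complexPairs (N : ℕ) (x : ℕ → ℝ) : EuclideanSpace ℂ (Fin N) :=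
  WithLp.toLp 2 fun j => ⟨x (2 * j), x (2 * j + 1)⟩

theorem sq_norm_complexPairs (N : ℕ) (x : ℕ → ℝ) :
    ‖complexPairs N x‖ ^ 2 = ∑ j ∈ Finset.range N, (x (2 * j) ^ 2 + x (2 * j + 1) ^ 2) := by
  rw [EuclideanSpace.norm_sq_eq, ← Fin.sum_univ_eq_sum_range]
  simp only [complexPairs, Complex.sq_norm, Complex.normSq_mk, ← sq]

theorem inner_complexPairs (N : ℕ) (x y : ℕ → ℝ) :
    ⟪complexPairs N x, complexPairs N y⟫_ℂ =
      ⟨∑ j ∈ Finset.range N, (x (2 * j) * y (2 * j) + x (2 * j + 1) * y (2 * j + 1)),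
        -∑ j ∈ Finset.range N, (x (2 * j + 1) * y (2 * j) - x (2 * j) * y (2 * j + 1))⟩ := by
  rw [PiLp.inner_apply]
  apply Complex.ext <;>
  · simp only [Complex.re_sum, Complex.im_sum, ← Finset.sum_neg_distrib]
    rw [← Fin.sum_univ_eq_sum_range]
    refine Finset.sum_congr rfl fun j _ => ?_
    simp [complexPairs]
    ring

theorem complexPairs_surjective (N : ℕ) : Function.Surjective (complexPairs N) := by
  intro u
  refine ⟨fun n => if h : n / 2 < N then
    (if n % 2 = 0 then (u ⟨n / 2, h⟩).re else (u ⟨n / 2, h⟩).im) else 0, ?_⟩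
  ext j
  have hdiv : (2 * (j : ℕ) + 1) / 2 = j := by omega
  apply Complex.ext <;> simp [complexPairs, hdiv]

theorem quadratic_system_iff_complexPairs (N : ℕ) (x y : ℕ → ℝ) (c₁ c₂ c₃ c₄ : ℝ) :
    ((∑ j ∈ Finset.range N, (x (2 * j) ^ 2 + x (2 * j + 1) ^ 2)) = c₁ ∧
        2 * (∑ j ∈ Finset.range N, (x (2 * j) * y (2 * j) + x (2 * j + 1) * y (2 * j + 1)))
          = c₂ ∧
        2 * (∑ j ∈ Finset.range N, (x (2 * j + 1) * y (2 * j) - x (2 * j) * y (2 * j + 1)))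
          = c₃ ∧
        (∑ j ∈ Finset.range N, (y (2 * j) ^ 2 + y (2 * j + 1) ^ 2)) = c₄) ↔
      ‖complexPairs N x‖ ^ 2 = c₁ ∧
        ⟪complexPairs N x, complexPairs N y⟫_ℂ = ⟨c₂ / 2, -(c₃ / 2)⟩ ∧
        ‖complexPairs N y‖ ^ 2 = c₄ := by
  rw [sq_norm_complexPairs, sq_norm_complexPairs, inner_complexPairs, Complex.ext_iff, neg_inj,
    eq_div_iff two_ne_zero, eq_div_iff two_ne_zero, mul_comm _ (2 : ℝ), mul_comm _ (2 : ℝ)]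
  tauto

/-- Solvability criterion for the time-extended quadratic system (indices `0`-based: the pair
`(x_{2j-1}, x_{2j})` of the paper is `(x (2*j), x (2*j+1))` here, `j = 0, …, N-1`):
for `N ≥ 2` there exist reals `x_1, …, x_{2N}, y_1, …, y_{2N}` with
`∑_j (x_{2j-1}² + x_{2j}²) = c₁`, `2 ∑_j (x_{2j-1} y_{2j-1} + x_{2j} y_{2j}) = c₂`,
`2 ∑_j (x_{2j} y_{2j-1} − x_{2j-1} y_{2j}) = c₃` and `∑_j (y_{2j-1}² + y_{2j}²) = c₄`
iff `c₁ ≥ 0`, `c₄ ≥ 0` and `4·c₁·c₄ ≥ c₂² + c₃²`. -/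
theorem extended_quadratic_system_solvable (N : ℕ) (hN : 2 ≤ N) (c₁ c₂ c₃ c₄ : ℝ) :
    (∃ x y : ℕ → ℝ,
        (∑ j ∈ Finset.range N, (x (2 * j) ^ 2 + x (2 * j + 1) ^ 2)) = c₁ ∧
        2 * (∑ j ∈ Finset.range N, (x (2 * j) * y (2 * j) + x (2 * j + 1) * y (2 * j + 1)))
          = c₂ ∧
        2 * (∑ j ∈ Finset.range N, (x (2 * j + 1) * y (2 * j) - x (2 * j) * y (2 * j + 1)))
          = c₃ ∧
        (∑ j ∈ Finset.range N, (y (2 * j) ^ 2 + y (2 * j + 1) ^ 2)) = c₄) ↔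
      (0 ≤ c₁ ∧ 0 ≤ c₄ ∧ c₂ ^ 2 + c₃ ^ 2 ≤ 4 * c₁ * c₄) := by
  have he : Orthonormal ℂ fun i : Fin 2 => EuclideanSpace.basisFun (Fin N) ℂ (Fin.castLE hN i) :=
    (EuclideanSpace.basisFun (Fin N) ℂ).orthonormal.comp _ (Fin.castLE_injective hN)
  have hγ : ‖(⟨c₂ / 2, -(c₃ / 2)⟩ : ℂ)‖ ^ 2 = (c₂ ^ 2 + c₃ ^ 2) / 4 := by
    rw [Complex.sq_norm, Complex.normSq_mk]
    ring
  have hsolvable : (0 ≤ c₁ ∧ 0 ≤ c₄ ∧ c₂ ^ 2 + c₃ ^ 2 ≤ 4 * c₁ * c₄) ↔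
      ∃ u v : EuclideanSpace ℂ (Fin N),
        ‖u‖ ^ 2 = c₁ ∧ ⟪u, v⟫_ℂ = ⟨c₂ / 2, -(c₃ / 2)⟩ ∧ ‖v‖ ^ 2 = c₄ := by
    rw [exists_sq_norm_inner_sq_norm_eq_iff he, hγ, div_le_iff₀ four_pos, mul_comm _ (4 : ℝ),
      ← mul_assoc]
  rw [hsolvable, (complexPairs_surjective N).exists₂]
  simp_rw [quadratic_system_iff_complexPairs]
end

section
/- Let A_1 and A_2 be n×n invertible complex matrices with det A_1 = det A_2. Then there exist n×n unitary matrices U_1, U_2, V and n×n upper-triangular matrices R_1, R_2 with real positive diagonal entries satisfying [R_1]_{jj} = [R_2]_{jj} for all j = 1,…,n, such that A_1 = U_1 R_1 V† and A_2 = U_2 R_2 V†. -/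
open Matrix ComplexOrder

/-!
Induct on `n`. If `‖A₁ x‖ < ‖A₂ x‖` for every `x ≠ 0`, then every eigenvalue `μ` of `A₂⁻¹ A₁`
(with eigenvector `v`, so `A₁ v = μ A₂ v`) has `|μ| < 1`, hence `|det A₁| < |det A₂|`. So when
`|det A₁| = |det A₂|` the continuous function `x ↦ ‖A₁ x‖ - ‖A₂ x‖` is somewhere `≥ 0` and
somewhere `≤ 0` on the connected set `ℂⁿ ∖ {0}`, hence vanishes at some unit vector `x`; put
`r = ‖A₁ x‖ = ‖A₂ x‖ > 0`. Completing `x` and `Aᵢ x / r` to unitary matrices `X` and `Wᵢ` turns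
the first column of `Wᵢᴴ Aᵢ X` into `r e₀`. The trailing `(n-1) × (n-1)` blocks again have
determinants of equal modulus, and a joint triangularization of them, bordered by `diag(1, ·)`,
triangularizes the pair `Wᵢᴴ Aᵢ X` with common first diagonal entry `r`.
-/

namespace Matrix

section OneBlockDiag

variable {R : Type*} {m : ℕ}

def oneBlockDiag [Zero R] [One R] (M : Matrix (Fin m) (Fin m) R) :
    Matrix (Fin (m + 1)) (Fin (m + 1)) R :=
  of (Fin.cases (Fin.cons 1 0) fun i => Fin.cons 0 (M i))

section Entries

variable [Zero R] [One R] (M : Matrix (Fin m) (Fin m) R)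

@[simp] lemma oneBlockDiag_zero_zero : oneBlockDiag M 0 0 = 1 := rfl
@[simp] lemma oneBlockDiag_zero_succ (j : Fin m) : oneBlockDiag M 0 j.succ = 0 := rfl
@[simp] lemma oneBlockDiag_succ_zero (i : Fin m) : oneBlockDiag M i.succ 0 = 0 := rfl
@[simp] lemma oneBlockDiag_succ_succ (i j : Fin m) : oneBlockDiag M i.succ j.succ = M i j := rfl

end Entries

lemma oneBlockDiag_one [Semiring R] : oneBlockDiag (1 : Matrix (Fin m) (Fin m) R) = 1 := by
  ext i j
  cases i using Fin.cases <;> cases j using Fin.cases <;> simp [one_apply, eq_comm]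

lemma oneBlockDiag_mul [Semiring R] (M N : Matrix (Fin m) (Fin m) R) :
    oneBlockDiag M * oneBlockDiag N = oneBlockDiag (M * N) := by
  ext i j
  cases i using Fin.cases <;> cases j using Fin.cases <;> simp [mul_apply, Fin.sum_univ_succ]

lemma conjTranspose_oneBlockDiag [Semiring R] [StarRing R] (M : Matrix (Fin m) (Fin m) R) :
    (oneBlockDiag M)ᴴ = oneBlockDiag Mᴴ := by
  ext i j
  cases i using Fin.cases <;> cases j using Fin.cases <;> simp

lemma oneBlockDiag_mem_unitaryGroup [CommRing R] [StarRing R] {M : Matrix (Fin m) (Fin m) R}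
    (hM : M ∈ unitaryGroup (Fin m) R) : oneBlockDiag M ∈ unitaryGroup (Fin (m + 1)) R := by
  rw [mem_unitaryGroup_iff, star_eq_conjTranspose, conjTranspose_oneBlockDiag, oneBlockDiag_mul,
    ← star_eq_conjTranspose, mem_unitaryGroup_iff.mp hM, oneBlockDiag_one]

variable [Semiring R] {T : Matrix (Fin (m + 1)) (Fin (m + 1)) R} {c : R}
  (P Q : Matrix (Fin m) (Fin m) R)

lemma oneBlockDiag_mul_mul_oneBlockDiag_succ_succ (i j : Fin m) :
    (oneBlockDiag P * T * oneBlockDiag Q) i.succ j.succ =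
      (P * T.submatrix Fin.succ Fin.succ * Q) i j := by
  simp [mul_apply, Fin.sum_univ_succ]

lemma col_zero_oneBlockDiag_mul_mul (hT : T.col 0 = Pi.single 0 c) :
    (oneBlockDiag P * T * oneBlockDiag Q).col 0 = Pi.single 0 c := by
  have hT' (i : Fin (m + 1)) : T i 0 = (Pi.single 0 c : Fin (m + 1) → R) i := congrFun hT i
  ext i
  cases i using Fin.cases <;> simp [mul_apply, Fin.sum_univ_succ, hT']

lemma diag_oneBlockDiag_mul_mul (hT : T.col 0 = Pi.single 0 c) :
    (oneBlockDiag P * T * oneBlockDiag Q).diag =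
      Fin.cons c (P * T.submatrix Fin.succ Fin.succ * Q).diag := by
  ext j
  cases j using Fin.cases with
  | zero => simpa using congrFun (col_zero_oneBlockDiag_mul_mul P Q hT) 0
  | succ j => exact oneBlockDiag_mul_mul_oneBlockDiag_succ_succ P Q j j

lemma blockTriangular_oneBlockDiag_mul_mul (hT : T.col 0 = Pi.single 0 c)
    (h : (P * T.submatrix Fin.succ Fin.succ * Q).BlockTriangular id) :
    (oneBlockDiag P * T * oneBlockDiag Q).BlockTriangular id := by
  intro i j hji
  cases i using Fin.cases with
  | zero => exact absurd hji (Fin.not_lt_zero j)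
  | succ i =>
    cases j using Fin.cases with
    | zero => simpa using congrFun (col_zero_oneBlockDiag_mul_mul P Q hT) i.succ
    | succ j =>
      rw [oneBlockDiag_mul_mul_oneBlockDiag_succ_succ]
      exact h (Fin.succ_lt_succ_iff.mp hji)

end OneBlockDiag

lemma det_eq_mul_det_submatrix_succ_succ {R : Type*} [CommRing R] {m : ℕ}
    {T : Matrix (Fin (m + 1)) (Fin (m + 1)) R} {c : R} (hT : T.col 0 = Pi.single 0 c) :
    T.det = c * (T.submatrix Fin.succ Fin.succ).det := by
  have hT' (i : Fin (m + 1)) : T i 0 = (Pi.single 0 c : Fin (m + 1) → R) i := congrFun hT i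
  simp [det_succ_column_zero, Fin.sum_univ_succ, hT']

variable {ι : Type*} [Fintype ι] [DecidableEq ι]

section Unitary

variable {α : Type*} [CommRing α] [StarRing α]
  {U V W X A R : Matrix ι ι α}

lemma eq_mul_mul_conjTranspose_iff (hU : U ∈ unitaryGroup ι α) (hV : V ∈ unitaryGroup ι α) :
    A = U * R * Vᴴ ↔ Uᴴ * A * V = R := by
  have hUU : Uᴴ * U = 1 := mem_unitaryGroup_iff'.mp hU
  have hUU' : U * Uᴴ = 1 := mem_unitaryGroup_iff.mp hU
  have hVV : Vᴴ * V = 1 := mem_unitaryGroup_iff'.mp hV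
  have hVV' : V * Vᴴ = 1 := mem_unitaryGroup_iff.mp hV
  constructor
  · rintro rfl
    simp only [Matrix.mul_assoc, hVV, ← Matrix.mul_assoc Uᴴ, hUU, Matrix.mul_one, Matrix.one_mul]
  · rintro rfl
    simp only [Matrix.mul_assoc, hVV', ← Matrix.mul_assoc U, hUU', Matrix.mul_one, Matrix.one_mul]

lemma col_conjTranspose_mul_mul_of_mulVec_col (hW : W ∈ unitaryGroup ι α) {j : ι} {r : α}
    (h : A *ᵥ X.col j = r • W.col j) : (Wᴴ * A * X).col j = Pi.single j r := by
  rw [← mulVec_single_one, ← mulVec_mulVec, mulVec_single_one, ← mulVec_mulVec, h, mulVec_smul,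
    ← mulVec_single_one, mulVec_mulVec, ← star_eq_conjTranspose, mem_unitaryGroup_iff'.mp hW,
    one_mulVec, ← Pi.single_smul, smul_eq_mul, mul_one]

end Unitary

lemma norm_det_conjTranspose_mul_mul {W X : Matrix ι ι ℂ}
    (hW : W ∈ unitaryGroup ι ℂ) (hX : X ∈ unitaryGroup ι ℂ) (A : Matrix ι ι ℂ) :
    ‖(Wᴴ * A * X).det‖ = ‖A.det‖ := by
  have hW1 : ‖W.det‖ = 1 := CStarRing.norm_of_mem_unitary (det_of_mem_unitary hW)
  have hX1 : ‖X.det‖ = 1 := CStarRing.norm_of_mem_unitary (det_of_mem_unitary hX)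
  rw [det_mul, det_mul, norm_mul, norm_mul, det_conjTranspose, norm_star, hW1, hX1, one_mul,
    mul_one]

lemma exists_mem_unitaryGroup_col_eq {𝕜 : Type*} [RCLike 𝕜] (j : ι)
    {y : EuclideanSpace 𝕜 ι} (hy : ‖y‖ = 1) : ∃ W ∈ unitaryGroup ι 𝕜, W.col j = y.ofLp := by
  have hy' : Orthonormal 𝕜 (({j} : Set ι).domRestrict fun _ => y) := by
    rw [orthonormal_iff_ite]
    intro k l
    rw [if_pos (Subsingleton.elim k l)]
    exact inner_self_eq_one_of_norm_eq_one hy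
  obtain ⟨b, hb⟩ := hy'.exists_orthonormalBasis_extension_of_card_eq (by simp)
  refine ⟨(EuclideanSpace.basisFun ι 𝕜).toBasis.toMatrix b,
    (EuclideanSpace.basisFun ι 𝕜).toMatrix_orthonormalBasis_mem_unitary b, ?_⟩
  ext i
  simp [Module.Basis.toMatrix_apply, hb j rfl]

lemma norm_det_lt_one_of_forall_mem_spectrum [Nonempty ι] {M : Matrix ι ι ℂ}
    (h : ∀ μ ∈ spectrum ℂ M, ‖μ‖ < 1) : ‖M.det‖ < 1 := by
  rcases eq_or_ne M.det 0 with h0 | h0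
  · simp [h0]
  rw [det_eq_prod_roots_charpoly] at h0 ⊢
  have hroots : M.charpoly.roots ≠ 0 := by
    rw [← Multiset.card_pos, IsAlgClosed.card_roots_eq_natDegree, charpoly_natDegree_eq_dim]
    exact Fintype.card_pos
  calc ‖M.charpoly.roots.prod‖ = (M.charpoly.roots.map (‖·‖)).prod := by
        simpa using map_multiset_prod (normHom : ℂ →*₀ ℝ) M.charpoly.roots
    _ < (M.charpoly.roots.map fun _ => (1 : ℝ)).prod :=
        Multiset.prod_map_lt_prod_map hroots _ _
          (fun μ hμ => norm_pos_iff.mpr fun hμ0 => h0 (Multiset.prod_eq_zero (hμ0 ▸ hμ)))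
          (fun μ hμ => h μ (mem_spectrum_of_isRoot_charpoly (Polynomial.isRoot_of_mem_roots hμ)))
    _ = 1 := by simp

lemma toLpLin_apply_ne_zero (p : ENNReal) {A : Matrix ι ι ℂ} (hA : A.det ≠ 0)
    {x : WithLp p (ι → ℂ)} (hx : x ≠ 0) : toLpLin p p A x ≠ 0 := by
  rw [toLpLin_apply, Ne, WithLp.toLp_eq_zero]
  exact fun h => hx ((WithLp.ofLp_eq_zero p).mp (eq_zero_of_mulVec_eq_zero hA h))

lemma norm_det_lt_of_forall_norm_toLpLin_lt [Nonempty ι] {A₁ A₂ : Matrix ι ι ℂ}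
    (h₂ : A₂.det ≠ 0)
    (h : ∀ x : EuclideanSpace ℂ ι, x ≠ 0 → ‖toLpLin 2 2 A₁ x‖ < ‖toLpLin 2 2 A₂ x‖) :
    ‖A₁.det‖ < ‖A₂.det‖ := by
  have hspec : ∀ μ ∈ spectrum ℂ (A₂⁻¹ * A₁), ‖μ‖ < 1 := by
    intro μ hμ
    rw [← spectrum_toLpLin 2, ← Module.End.hasEigenvalue_iff_mem_spectrum] at hμ
    obtain ⟨v, hv⟩ := hμ.exists_hasEigenvector
    have hA₁v : toLpLin 2 2 A₁ v = μ • toLpLin 2 2 A₂ v := by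
      rw [← mul_nonsing_inv_cancel_left (A := A₂) A₁ (isUnit_iff_ne_zero.mpr h₂), toLpLin_mul_same,
        LinearMap.comp_apply, hv.apply_eq_smul, map_smul]
    have hpos : 0 < ‖toLpLin 2 2 A₂ v‖ := norm_pos_iff.mpr (toLpLin_apply_ne_zero 2 h₂ hv.2)
    have hlt := h v hv.2
    rw [hA₁v, norm_smul] at hlt
    exact (mul_lt_iff_lt_one_left hpos).mp hlt
  have := norm_det_lt_one_of_forall_mem_spectrum hspec
  rwa [det_mul, det_nonsing_inv, Ring.inverse_eq_inv', norm_mul, norm_inv,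
    inv_mul_lt_one₀ (norm_pos_iff.mpr h₂)] at this

lemma exists_ne_zero_norm_toLpLin_le [Nonempty ι] {A₁ A₂ : Matrix ι ι ℂ} (h₂ : A₂.det ≠ 0)
    (hdet : ‖A₁.det‖ = ‖A₂.det‖) :
    ∃ x : EuclideanSpace ℂ ι, x ≠ 0 ∧ ‖toLpLin 2 2 A₂ x‖ ≤ ‖toLpLin 2 2 A₁ x‖ := by
  by_contra! h
  exact (norm_det_lt_of_forall_norm_toLpLin_lt h₂ h).ne hdet

theorem exists_norm_eq_one_norm_toLpLin_eq [Nonempty ι] {A₁ A₂ : Matrix ι ι ℂ}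
    (h₁ : A₁.det ≠ 0) (hdet : ‖A₁.det‖ = ‖A₂.det‖) :
    ∃ x : EuclideanSpace ℂ ι, ‖x‖ = 1 ∧ ‖toLpLin 2 2 A₁ x‖ = ‖toLpLin 2 2 A₂ x‖ := by
  have h₂ : A₂.det ≠ 0 := norm_ne_zero_iff.mp (hdet ▸ norm_ne_zero_iff.mpr h₁)
  obtain ⟨x₁, hx₁, hle₁⟩ := exists_ne_zero_norm_toLpLin_le h₂ hdet
  obtain ⟨x₂, hx₂, hle₂⟩ := exists_ne_zero_norm_toLpLin_le h₁ hdet.symm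
  have hrank : 1 < Module.rank ℝ (EuclideanSpace ℂ ι) := by
    rw [← Module.finrank_eq_rank, finrank_real_of_complex, finrank_euclideanSpace]
    have := Fintype.card_pos (α := ι)
    norm_cast
    omega
  have hcont : Continuous fun x : EuclideanSpace ℂ ι => ‖toLpLin 2 2 A₁ x‖ - ‖toLpLin 2 2 A₂ x‖ :=
    ((toLpLin 2 2 A₁).continuous_of_finiteDimensional.norm).sub
      (toLpLin 2 2 A₂).continuous_of_finiteDimensional.norm
  obtain ⟨x, hx, hx0⟩ := (isConnected_compl_singleton_of_one_lt_rank hrank 0).isPreconnected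
    |>.intermediate_value hx₂ hx₁ hcont.continuousOn ⟨sub_nonpos.mpr hle₂, sub_nonneg.mpr hle₁⟩
  refine ⟨(‖x‖⁻¹ : ℂ) • x, norm_smul_inv_norm hx, ?_⟩
  rw [map_smul, map_smul, norm_smul, norm_smul, sub_eq_zero.mp hx0]

lemma exists_mem_unitaryGroup_col_conjTranspose_mul_mul_eq {A X : Matrix ι ι ℂ} {j : ι}
    {x : EuclideanSpace ℂ ι} (hX : X.col j = x.ofLp) {r : ℝ} (hr : 0 < r)
    (hAx : ‖toLpLin 2 2 A x‖ = r) :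
    ∃ W ∈ unitaryGroup ι ℂ, (Wᴴ * A * X).col j = Pi.single j (r : ℂ) := by
  have hr' : (r : ℂ) ≠ 0 := Complex.ofReal_ne_zero.mpr hr.ne'
  have hy : ‖(r : ℂ)⁻¹ • toLpLin 2 2 A x‖ = 1 := by
    rw [norm_smul, norm_inv, Complex.norm_real, Real.norm_of_nonneg hr.le, hAx,
      inv_mul_cancel₀ hr.ne']
  obtain ⟨W, hW, hWy⟩ := exists_mem_unitaryGroup_col_eq j hy
  refine ⟨W, hW, col_conjTranspose_mul_mul_of_mulVec_col hW ?_⟩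
  rw [hWy, WithLp.ofLp_smul, ofLp_toLpLin, toLin'_apply, hX, smul_inv_smul₀ hr']

theorem exists_unitary_conj_col_eq_single {A₁ A₂ : Matrix ι ι ℂ} (j : ι) (h₁ : A₁.det ≠ 0)
    (hdet : ‖A₁.det‖ = ‖A₂.det‖) :
    ∃ X ∈ unitaryGroup ι ℂ, ∃ W₁ ∈ unitaryGroup ι ℂ, ∃ W₂ ∈ unitaryGroup ι ℂ, ∃ r : ℝ, 0 < r ∧
      (W₁ᴴ * A₁ * X).col j = Pi.single j (r : ℂ) ∧ (W₂ᴴ * A₂ * X).col j = Pi.single j (r : ℂ) := by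
  have : Nonempty ι := ⟨j⟩
  obtain ⟨x, hx, hAx⟩ := exists_norm_eq_one_norm_toLpLin_eq h₁ hdet
  obtain ⟨X, hX, hXx⟩ := exists_mem_unitaryGroup_col_eq j hx
  have hr : 0 < ‖toLpLin 2 2 A₁ x‖ :=
    norm_pos_iff.mpr (toLpLin_apply_ne_zero 2 h₁ (norm_ne_zero_iff.mp (hx ▸ one_ne_zero)))
  obtain ⟨W₁, hW₁, hT₁⟩ := exists_mem_unitaryGroup_col_conjTranspose_mul_mul_eq hXx hr rfl
  obtain ⟨W₂, hW₂, hT₂⟩ := exists_mem_unitaryGroup_col_conjTranspose_mul_mul_eq hXx hr hAx.symm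
  exact ⟨X, hX, W₁, hW₁, W₂, hW₂, _, hr, hT₁, hT₂⟩

end Matrix

/-- A 2-JET of the pair `(A₁, A₂)`. -/
def HasJointEquidiagTriangularization {n : ℕ} (A₁ A₂ : Matrix (Fin n) (Fin n) ℂ) : Prop :=
  ∃ U₁ U₂ V R₁ R₂ : Matrix (Fin n) (Fin n) ℂ,
    U₁ ∈ unitaryGroup (Fin n) ℂ ∧ U₂ ∈ unitaryGroup (Fin n) ℂ ∧ V ∈ unitaryGroup (Fin n) ℂ ∧
    R₁.BlockTriangular id ∧ R₂.BlockTriangular id ∧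
    (∀ j, 0 < R₁ j j) ∧ (∀ j, 0 < R₂ j j) ∧ (∀ j, R₁ j j = R₂ j j) ∧
    A₁ = U₁ * R₁ * Vᴴ ∧ A₂ = U₂ * R₂ * Vᴴ

namespace HasJointEquidiagTriangularization

lemma of_fin_zero (A₁ A₂ : Matrix (Fin 0) (Fin 0) ℂ) : HasJointEquidiagTriangularization A₁ A₂ :=
  ⟨1, 1, 1, 1, 1, one_mem _, one_mem _, one_mem _, blockTriangular_one, blockTriangular_one,
    finZeroElim, finZeroElim, finZeroElim, Subsingleton.elim _ _, Subsingleton.elim _ _⟩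

lemma of_conjTranspose_mul_mul {n : ℕ} {A₁ A₂ W₁ W₂ X : Matrix (Fin n) (Fin n) ℂ}
    (hW₁ : W₁ ∈ unitaryGroup (Fin n) ℂ) (hW₂ : W₂ ∈ unitaryGroup (Fin n) ℂ)
    (hX : X ∈ unitaryGroup (Fin n) ℂ)
    (h : HasJointEquidiagTriangularization (W₁ᴴ * A₁ * X) (W₂ᴴ * A₂ * X)) :
    HasJointEquidiagTriangularization A₁ A₂ := by
  obtain ⟨U₁, U₂, V, R₁, R₂, hU₁, hU₂, hV, hR₁, hR₂, hpos₁, hpos₂, hdiag, hT₁, hT₂⟩ := h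
  refine ⟨W₁ * U₁, W₂ * U₂, X * V, R₁, R₂, mul_mem hW₁ hU₁, mul_mem hW₂ hU₂, mul_mem hX hV,
    hR₁, hR₂, hpos₁, hpos₂, hdiag, ?_, ?_⟩
  · calc A₁ = W₁ * (W₁ᴴ * A₁ * X) * Xᴴ := (eq_mul_mul_conjTranspose_iff hW₁ hX).mpr rfl
      _ = W₁ * U₁ * R₁ * (X * V)ᴴ := by
        rw [hT₁, conjTranspose_mul]
        simp only [Matrix.mul_assoc]
  · calc A₂ = W₂ * (W₂ᴴ * A₂ * X) * Xᴴ := (eq_mul_mul_conjTranspose_iff hW₂ hX).mpr rfl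
      _ = W₂ * U₂ * R₂ * (X * V)ᴴ := by
        rw [hT₂, conjTranspose_mul]
        simp only [Matrix.mul_assoc]

lemma of_submatrix_succ {m : ℕ} {T₁ T₂ : Matrix (Fin (m + 1)) (Fin (m + 1)) ℂ} {r : ℝ}
    (hr : 0 < r) (hT₁ : T₁.col 0 = Pi.single 0 (r : ℂ)) (hT₂ : T₂.col 0 = Pi.single 0 (r : ℂ))
    (h : HasJointEquidiagTriangularization (T₁.submatrix Fin.succ Fin.succ)
      (T₂.submatrix Fin.succ Fin.succ)) :
    HasJointEquidiagTriangularization T₁ T₂ := by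
  obtain ⟨U₁, U₂, V, R₁, R₂, hU₁, hU₂, hV, hR₁, hR₂, hpos₁, hpos₂, hdiag, hT₁', hT₂'⟩ := h
  rw [eq_mul_mul_conjTranspose_iff hU₁ hV] at hT₁'
  rw [eq_mul_mul_conjTranspose_iff hU₂ hV] at hT₂'
  have hdiag₁ := diag_oneBlockDiag_mul_mul U₁ᴴ V hT₁
  have hdiag₂ := diag_oneBlockDiag_mul_mul U₂ᴴ V hT₂
  rw [hT₁'] at hdiag₁
  rw [hT₂'] at hdiag₂
  have hpos {R : Matrix (Fin m) (Fin m) ℂ} {T : Matrix (Fin (m + 1)) (Fin (m + 1)) ℂ}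
      (hR : ∀ j, 0 < R j j) (hT : T.diag = Fin.cons (r : ℂ) R.diag) : ∀ j, 0 < T j j := by
    intro j
    change 0 < T.diag j
    rw [hT]
    cases j using Fin.cases
    · simpa using hr
    · simpa using hR _
  refine ⟨oneBlockDiag U₁, oneBlockDiag U₂, oneBlockDiag V,
    oneBlockDiag U₁ᴴ * T₁ * oneBlockDiag V, oneBlockDiag U₂ᴴ * T₂ * oneBlockDiag V,
    oneBlockDiag_mem_unitaryGroup hU₁, oneBlockDiag_mem_unitaryGroup hU₂,
    oneBlockDiag_mem_unitaryGroup hV,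
    blockTriangular_oneBlockDiag_mul_mul _ _ hT₁ (hT₁' ▸ hR₁),
    blockTriangular_oneBlockDiag_mul_mul _ _ hT₂ (hT₂' ▸ hR₂),
    hpos hpos₁ hdiag₁, hpos hpos₂ hdiag₂,
    fun j => ?_, ?_, ?_⟩
  · change (oneBlockDiag U₁ᴴ * T₁ * oneBlockDiag V).diag j =
      (oneBlockDiag U₂ᴴ * T₂ * oneBlockDiag V).diag j
    rw [hdiag₁, hdiag₂, show R₁.diag = R₂.diag from funext hdiag]
  · rw [eq_mul_mul_conjTranspose_iff (oneBlockDiag_mem_unitaryGroup hU₁)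
      (oneBlockDiag_mem_unitaryGroup hV), conjTranspose_oneBlockDiag]
  · rw [eq_mul_mul_conjTranspose_iff (oneBlockDiag_mem_unitaryGroup hU₂)
      (oneBlockDiag_mem_unitaryGroup hV), conjTranspose_oneBlockDiag]

end HasJointEquidiagTriangularization

theorem hasJointEquidiagTriangularization_of_norm_det_eq {n : ℕ}
    (A₁ A₂ : Matrix (Fin n) (Fin n) ℂ) (h₁ : A₁.det ≠ 0) (hdet : ‖A₁.det‖ = ‖A₂.det‖) :
    HasJointEquidiagTriangularization A₁ A₂ := by
  induction n with
  | zero => exact .of_fin_zero A₁ A₂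
  | succ m ih =>
    obtain ⟨X, hX, W₁, hW₁, W₂, hW₂, r, hr, hT₁, hT₂⟩ := exists_unitary_conj_col_eq_single 0 h₁ hdet
    have hnorm {A W : Matrix (Fin (m + 1)) (Fin (m + 1)) ℂ} (hW : W ∈ unitaryGroup _ ℂ)
        (hT : (Wᴴ * A * X).col 0 = Pi.single 0 (r : ℂ)) :
        ‖A.det‖ = r * ‖((Wᴴ * A * X).submatrix Fin.succ Fin.succ).det‖ := by
      rw [← norm_det_conjTranspose_mul_mul hW hX, det_eq_mul_det_submatrix_succ_succ hT, norm_mul,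
        Complex.norm_real, Real.norm_of_nonneg hr.le]
    have hnorm₁ := hnorm hW₁ hT₁
    refine .of_conjTranspose_mul_mul hW₁ hW₂ hX (.of_submatrix_succ hr hT₁ hT₂ (ih _ _ ?_ ?_))
    · rintro h0
      rw [h0, norm_zero, mul_zero, norm_eq_zero] at hnorm₁
      exact h₁ hnorm₁
    · exact mul_left_cancel₀ hr.ne' (hnorm₁.symm.trans (hdet.trans (hnorm hW₂ hT₂)))

theorem two_jet_exists_general {n : ℕ} (A₁ A₂ : Matrix (Fin n) (Fin n) ℂ)
    (h₁ : IsUnit A₁.det) (hdet : A₁.det = A₂.det) :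
    ∃ U₁ U₂ V R₁ R₂ : Matrix (Fin n) (Fin n) ℂ,
      U₁ ∈ Matrix.unitaryGroup (Fin n) ℂ ∧ U₂ ∈ Matrix.unitaryGroup (Fin n) ℂ ∧
      V ∈ Matrix.unitaryGroup (Fin n) ℂ ∧
      R₁.BlockTriangular id ∧ R₂.BlockTriangular id ∧
      (∀ j, 0 < R₁ j j) ∧ (∀ j, 0 < R₂ j j) ∧
      (∀ j, R₁ j j = R₂ j j) ∧
      A₁ = U₁ * R₁ * Vᴴ ∧ A₂ = U₂ * R₂ * Vᴴ :=
  hasJointEquidiagTriangularization_of_norm_det_eq A₁ A₂ h₁.ne_zero (congrArg norm hdet)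

/-- **Existence of a 2-JET (joint equi-diagonal triangularization).**
Any two invertible `n × n` complex matrices `A₁, A₂` with equal determinants can be jointly
triangularized with a common right unitary matrix: there exist unitary `U₁, U₂, V` and upper
triangular `R₁, R₂` with real positive diagonal entries satisfying `[R₁]ⱼⱼ = [R₂]ⱼⱼ` for all
`j`, such that `A₁ = U₁ * R₁ * Vᴴ` and `A₂ = U₂ * R₂ * Vᴴ`. -/
theorem two_jet_exists {n : ℕ} (A₁ A₂ : Matrix (Fin n) (Fin n) ℂ)
    (h₁ : IsUnit A₁.det) (h₂ : IsUnit A₂.det) (hdet : A₁.det = A₂.det) :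
    ∃ U₁ U₂ V R₁ R₂ : Matrix (Fin n) (Fin n) ℂ,
      U₁ ∈ Matrix.unitaryGroup (Fin n) ℂ ∧ U₂ ∈ Matrix.unitaryGroup (Fin n) ℂ ∧
      V ∈ Matrix.unitaryGroup (Fin n) ℂ ∧
      R₁.BlockTriangular id ∧ R₂.BlockTriangular id ∧
      (∀ j, 0 < R₁ j j) ∧ (∀ j, 0 < R₂ j j) ∧
      (∀ j, R₁ j j = R₂ j j) ∧
      A₁ = U₁ * R₁ * Vᴴ ∧ A₂ = U₂ * R₂ * Vᴴ :=
  two_jet_exists_general A₁ A₂ h₁ hdet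
end
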